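/- For every k-colored permutation π of length n, the recording tableau of the k-ribbon insertion algorithm equals the path tableau produced by Fomin's growth rules along the top edge of the square diagram: Q(π) = Q̂(π). -/

import Mathlib

namespace KRF

/-- A letter of the alphabet `{1_1, …, 1_k, 2}`:  `one j` stands for the letter `1_j`
(with `1 ≤ j ≤ k` for genuine letters), and `two` stands for the letter `2`. -/
inductive Letter (k : ℕ) : Type where
  | one : ℕ → Letter k
  | two : Letter k
deriving DecidableEq

/-- A word over the alphabet `{1_1, …, 1_k, 2}`, listed from the leftmost letter to the
rightmost letter. -/
abbrev Word (k : ℕ) := List (Letter k)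

/-- The contribution of a letter to the rank: each `1_j` counts `1` and each `2` counts `2`. -/
def Letter.rank {k : ℕ} : Letter k → ℕ
  | .one _ => 1
  | .two => 2

/-- The rank of a word: the sum of its letters. -/
def Word.rank {k : ℕ} (w : Word k) : ℕ := (w.map Letter.rank).sum

/-- The letter `1_j` is valid when `1 ≤ j ≤ k`. -/
def Letter.Valid (k : ℕ) : Letter k → Prop
  | .one j => 1 ≤ j ∧ j ≤ k
  | .two => True

/-- A genuine word of the Fibonacci poset `Z(k)`: all of its letters are valid. -/
def Word.Valid (k : ℕ) (w : Word k) : Prop := ∀ l ∈ w, l.Valid k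

/-- The cover relation of the Fibonacci poset `Z(k)`:  `z` is covered by `w` iff `z` is
obtained from `w` either by changing a `2` into some `1_j` when all letters to the left of
that `2` are `2`'s, or by deleting the leftmost letter of the form `1_j`. -/
def ZCovers (k : ℕ) (z w : Word k) : Prop :=
  (∃ (p s : Word k) (j : ℕ), (∀ l ∈ p, l = Letter.two) ∧ 1 ≤ j ∧ j ≤ k ∧
      w = p ++ Letter.two :: s ∧ z = p ++ Letter.one j :: s) ∨
  (∃ (p s : Word k) (j : ℕ), (∀ l ∈ p, l = Letter.two) ∧ 1 ≤ j ∧ j ≤ k ∧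
      w = p ++ Letter.one j :: s ∧ z = p ++ s)

/-- `c 0 ⋖ c 1 ⋖ ⋯ ⋖ c n` is a saturated chain in `Z(k)` starting at the empty word. -/
def IsZChain (k n : ℕ) (c : ℕ → Word k) : Prop :=
  c 0 = [] ∧ ∀ i, i < n → ZCovers k (c i) (c (i + 1))

end KRF
namespace KRF

/-- A column of a (tiled and filled) `k`-ribbon Fibonacci tableau.
`single h v` is a column of height 1 (shape letter `1_h`) tiled by one `k`-ribbon of
height `h` filled with the value `v`.
`double ht hb vt vb` is a column of height 2 (shape letter `2`) tiled by a `k`-ribbon of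
height `ht` filled with `vt` stacked on top of a `k`-ribbon of height `hb` (always
`hb = k + 1 - ht` for genuine tableaux) filled with `vb`. -/
inductive Col (k : ℕ) : Type where
  | single : ℕ → ℕ → Col k
  | double : ℕ → ℕ → ℕ → ℕ → Col k
deriving DecidableEq

/-- A (tiled, filled) `k`-ribbon Fibonacci tableau: its list of columns, from the leftmost
column to the rightmost one. -/
abbrev Tab (k : ℕ) := List (Col k)

/-- The shape letter of a column. -/
def Col.shape {k : ℕ} : Col k → Letter k
  | .single h _ => Letter.one h
  | .double _ _ _ _ => Letter.two

/-- The `k`-ribbon Fibonacci shape (a word) underlying a tableau. -/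
def Tab.shape {k : ℕ} (T : Tab k) : Word k := T.map Col.shape

/-- The value in the bottom `k`-ribbon of a column. -/
def Col.bottomVal {k : ℕ} : Col k → ℕ
  | .single _ v => v
  | .double _ _ _ vb => vb

/-- The heights occurring in a column are genuine ribbon heights: between `1` and `k`,
and in a column of height 2 the two heights sum to `k + 1`. -/
def Col.HeightsValid (k : ℕ) : Col k → Prop
  | .single h _ => 1 ≤ h ∧ h ≤ k
  | .double ht hb _ _ => 1 ≤ ht ∧ ht ≤ k ∧ hb = k + 1 - ht

/-- The list of all entries of a tableau (one for each `k`-ribbon). -/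
def Tab.entries {k : ℕ} (T : Tab k) : List ℕ :=
  (T.map fun c => match c with
    | Col.single _ v => [v]
    | Col.double _ _ vt vb => [vt, vb]).flatten

/-- The list of the bottom-ribbon values of the columns of a tableau. -/
def Tab.bottoms {k : ℕ} (T : Tab k) : List ℕ := T.map Col.bottomVal

/-- `T` is a standard `k`-ribbon Fibonacci tableau with entries `1, …, n`:
heights are valid, the entries are exactly `1, …, n`,  and the tableau can be built by
placing `n, n-1, …, 1` in order, each new `k`-ribbon being either appended (as a new
rightmost height-1 column) to the shape formed by the `k`-ribbons containing larger
entries, or stacked on top of a single such `k`-ribbon.  Equivalently (and this is how we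
formalize it): the bottom entries strictly decrease from left to right (in particular the
`k`-ribbon containing the leftmost square of the bottom row contains `n`), and in each
column of height 2 the top entry is smaller than the bottom entry. -/
def IsStandardTab (k n : ℕ) (T : Tab k) : Prop :=
  (∀ c ∈ T, Col.HeightsValid k c) ∧
  (Tab.entries T).Perm (List.range' 1 n) ∧
  List.Chain' (fun a b => b < a) (Tab.bottoms T) ∧
  (∀ c ∈ T, ∀ ht hb vt vb, c = Col.double ht hb vt vb → vt < vb)

/-- Updating a (partial) path tableau along one cover step `z ⋖ w` of `Z(k)`, placing the
value `i` in the `k` new squares of `w` relative to `z`:  if `w` is obtained from `z` by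
inserting a letter `1_j` after the prefix of `2`'s, a new height-1 column with a single
ribbon of height `j` filled with `i` is created there; if `w` is obtained from `z` by
changing the letter `1_h` just after the prefix of `2`'s into a `2`, the `k` new squares
of that column form a `k`-ribbon of height `k + 1 - h` filled with `i`, stacked on top of
the already present `k`-ribbon of height `h`. -/
def updateTab (k : ℕ) (i : ℕ) : Word k → Word k → Tab k → Tab k
  | Letter.two :: z', Letter.two :: w', c :: T => c :: updateTab k i z' w' T
  | Letter.one h :: _, Letter.two :: _, Col.single _ v :: T =>
      Col.double (k + 1 - h) h i v :: T
  | z, Letter.one j :: w', T => if z = w' then Col.single j i :: T else T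
  | _, _, T => T

/-- The `k`-ribbon Fibonacci path tableau determined by a saturated chain in `Z(k)`:
for each `i = 1, …, n` the value `i` is placed in the `k` new squares of `c i` relative
to `c (i-1)`. -/
def chainTab (k : ℕ) (c : ℕ → Word k) : ℕ → Tab k
  | 0 => []
  | m + 1 => updateTab k (m + 1) (c m) (c (m + 1)) (chainTab k c m)

/-- `T` is a `k`-ribbon Fibonacci path tableau with entries `1, …, n`: it is obtained
from some saturated chain `∅ = c 0 ⋖ c 1 ⋖ ⋯ ⋖ c n` in `Z(k)` by placing `i`'s in the
`k` new squares created at the `i`-th step. -/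
def IsPathTab (k n : ℕ) (T : Tab k) : Prop :=
  ∃ c : ℕ → Word k, IsZChain k n c ∧ T = chainTab k c n

end KRF
namespace KRF

/-- A `k`-colored permutation of length `n`: a permutation `x_1 x_2 ⋯ x_n` of `{1, …, n}`
(here `x_i = perm i + 1`, using `Fin n` positions and values) together with a color
`color i ∈ {1, …, k}` attached to each entry. -/
structure ColoredPerm (n k : ℕ) : Type where
  perm : Equiv.Perm (Fin n)
  color : Fin n → ℕ
  color_pos : ∀ i, 1 ≤ color i
  color_le : ∀ i, color i ≤ k

/-- Insertion of a value `x` of color `j` into a `k`-ribbon Fibonacci tableau: compare `x`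
with the value `t` in the `k`-ribbon containing the leftmost square of the bottom row.
If the tableau is empty or `x > t`, a new leftmost height-1 column consisting of a single
`k`-ribbon of height `j` filled with `x` is created.  If `x < t`, a `k`-ribbon of height
`j` filled with `x` is placed on top of the `k`-ribbon containing `t` (which is forced to
become a `k`-ribbon of height `k + 1 - j`); if a `k`-ribbon of height `l` filled with `b`
was already on top of the ribbon containing `t`, it is bumped out and the value `b` with
color `l` is inserted recursively into the tableau formed by the columns to the right. -/
def insertVal (k : ℕ) (x j : ℕ) : Tab k → Tab k
  | [] => [Col.single j x]
  | c :: rest =>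
    if Col.bottomVal c < x then Col.single j x :: c :: rest
    else
      match c with
      | Col.single _ v => Col.double j (k + 1 - j) x v :: rest
      | Col.double ht _ vt vb => Col.double j (k + 1 - j) x vb :: insertVal k vt ht rest

/-- The insertion tableau obtained after inserting the first `i` colored entries
`x_1^{j_1}, …, x_i^{j_i}` of the `k`-colored permutation `π` into the empty tableau. -/
def PPartial (k n : ℕ) (π : ColoredPerm n k) (i : ℕ) : Tab k :=
  ((List.finRange n).take i).foldl
    (fun T m => insertVal k ((π.perm m : ℕ) + 1) (π.color m) T) []

/-- The insertion tableau `P(π)` of a `k`-colored permutation. -/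
def PTab (k n : ℕ) (π : ColoredPerm n k) : Tab k := PPartial k n π n

/-- The chain of shapes of the partial insertion tableaux of `π`. -/
def QChain (k n : ℕ) (π : ColoredPerm n k) (i : ℕ) : Word k :=
  Tab.shape (PPartial k n π i)

/-- The recording tableau `Q(π)`: it has the same shape as `P(π)`, and after the `i`-th
insertion the value `i` is placed in the `k` squares by which the shape grew at step `i`. -/
def QTab (k n : ℕ) (π : ColoredPerm n k) : Tab k := chainTab k (QChain k n π) n

end KRF
namespace KRF

/-- Fomin's local growth rule: given the labels `ν` (bottom-left), `μ₁` (top-left),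
`μ₂` (bottom-right) of a unit square and the `X` of the square (`some j` if the square
contains an `X^j`, `none` otherwise), it computes the top-right label `λ`:
(1) if exactly one of `μ₁, μ₂` covers `ν` and the other equals `ν`, then `λ` is the
covering one; (2) if both cover `ν` then `λ = 2ν`; (3) if `μ₁ = ν = μ₂` and the square
contains an `X^j` then `λ = 1_j ν`; (4) if `μ₁ = ν = μ₂` and there is no `X`, `λ = ν`. -/
def growthRule (k : ℕ) (ν μ₁ μ₂ : Word k) (x : Option ℕ) : Word k :=
  if μ₁ = ν ∧ μ₂ = ν then
    match x with
    | some j => Letter.one j :: ν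
    | none => ν
  else if μ₁ = ν then μ₂
  else if μ₂ = ν then μ₁
  else Letter.two :: ν

/-- The content of the unit square in column `c+1` and row `r+1` (1-indexed) of the square
diagram of `π`: `some j` if it contains an `X^j` (i.e. `π` sends position `c+1` to value
`r+1`, colored `j`), and `none` otherwise. -/
def squareX (k n : ℕ) (π : ColoredPerm n k) (c r : ℕ) : Option ℕ :=
  if h : c < n ∧ r < n then
    if (π.perm ⟨c, h.1⟩ : ℕ) = r then some (π.color ⟨c, h.1⟩) else none
  else none

/-- The labels of the corners of the square diagram of `π` produced by Fomin's growth
rules: every corner on the left and bottom edges is labeled by the empty word, and the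
top-right corner of each unit square is computed by the local growth rule. -/
def growth (k n : ℕ) (π : ColoredPerm n k) : ℕ → ℕ → Word k
  | 0, _ => []
  | _ + 1, 0 => []
  | c + 1, r + 1 =>
      growthRule k (growth k n π c r) (growth k n π c (r + 1)) (growth k n π (c + 1) r)
        (squareX k n π c r)
termination_by c r => (c, r)

/-- The saturated chain read bottom-to-top up the right edge of the growth diagram. -/
def PhatChain (k n : ℕ) (π : ColoredPerm n k) (r : ℕ) : Word k := growth k n π n r

/-- The saturated chain read left-to-right along the top edge of the growth diagram. -/
def QhatChain (k n : ℕ) (π : ColoredPerm n k) (c : ℕ) : Word k := growth k n π c n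

/-- The `k`-ribbon Fibonacci path tableau `P̂(π)` obtained from the right edge of the
growth diagram of `π`. -/
def PhatTab (k n : ℕ) (π : ColoredPerm n k) : Tab k := chainTab k (PhatChain k n π) n

/-- The `k`-ribbon Fibonacci path tableau `Q̂(π)` obtained from the top edge of the
growth diagram of `π`. -/
def QhatTab (k n : ℕ) (π : ColoredPerm n k) : Tab k := chainTab k (QhatChain k n π) n

end KRF

/-!
Label the corner `(c, r)` of the growth diagram by the shape of the insertion tableau of the
first `c` entries of `π` whose values are at most `r`. These labels satisfy Fomin's local rules,
so they are the growth labels; on the top edge `r = n` nothing is discarded, hence the top chain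
is the chain of shapes recorded by insertion. The one delicate square is the one where `r + 1`
is already among the first `c` entries and the new entry is smaller: there `r + 1` is the
largest value present, and the new entry ends up stacked on top of it in the first column,
which is rule (2).
-/

namespace KRF

section Insertion

variable {k : ℕ}

def insertList (k : ℕ) (T : Tab k) (L : List (ℕ × ℕ)) : Tab k :=
  L.foldl (fun T p => insertVal k p.1 p.2 T) T

@[simp]
theorem insertList_nil (T : Tab k) : insertList k T [] = T := rfl

@[simp]
theorem insertList_cons (T : Tab k) (p : ℕ × ℕ) (L : List (ℕ × ℕ)) :
    insertList k T (p :: L) = insertList k (insertVal k p.1 p.2 T) L := rfl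

theorem insertList_append (T : Tab k) (L M : List (ℕ × ℕ)) :
    insertList k T (L ++ M) = insertList k (insertList k T L) M :=
  List.foldl_append

theorem insertVal_cons (x j : ℕ) (c : Col k) (T : Tab k) :
    insertVal k x j (c :: T) =
      if c.bottomVal < x then Col.single j x :: c :: T
      else match c with
        | Col.single _ v => Col.double j (k + 1 - j) x v :: T
        | Col.double ht _ vt vb => Col.double j (k + 1 - j) x vb :: insertVal k vt ht T := rfl

theorem insertVal_of_forall_lt {T : Tab k} {x : ℕ} (j : ℕ) (h : ∀ v ∈ T.entries, v < x) :
    insertVal k x j T = Col.single j x :: T := by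
  cases T with
  | nil => rfl
  | cons c T =>
    have hc : c.bottomVal < x := h _ (by cases c <;> simp [Tab.entries, Col.bottomVal])
    rw [insertVal_cons, if_pos hc]

theorem rank_shape_insertVal (T : Tab k) (x j : ℕ) :
    (insertVal k x j T).shape.rank = T.shape.rank + 1 := by
  induction T generalizing x j with
  | nil => rfl
  | cons c T ih =>
    rw [insertVal_cons]
    cases c with
    | single => split_ifs <;> simp [Tab.shape, Word.rank, Col.shape, Letter.rank] <;> omega
    | double ht hb vt vb =>
      have := ih vt ht
      split_ifs <;> simp_all [Tab.shape, Word.rank, Col.shape, Letter.rank] <;> omega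

theorem mem_entries_insertVal {T : Tab k} {x j v : ℕ} (hv : v ∈ (insertVal k x j T).entries) :
    v = x ∨ v ∈ T.entries := by
  induction T generalizing x j with
  | nil => simpa [insertVal, Tab.entries] using hv
  | cons c T ih =>
    rw [insertVal_cons] at hv
    cases c with
    | single => split_ifs at hv <;> simp [Tab.entries] at hv ⊢ <;> tauto
    | double ht hb vt vb =>
      split_ifs at hv
      · simp [Tab.entries] at hv ⊢; tauto
      · simp only [Tab.entries, List.map_cons, List.flatten_cons, List.mem_append] at hv ⊢
        rcases hv with hv | hv
        · simp at hv ⊢; tauto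
        · rcases ih hv with rfl | hv
          · simp
          · exact .inr (.inr hv)

theorem rank_shape_insertList (T : Tab k) (L : List (ℕ × ℕ)) :
    (insertList k T L).shape.rank = T.shape.rank + L.length := by
  induction L generalizing T with
  | nil => rfl
  | cons p L ih => rw [insertList_cons, ih, rank_shape_insertVal]; simp; omega

theorem mem_entries_insertList {T : Tab k} {L : List (ℕ × ℕ)} {v : ℕ}
    (hv : v ∈ (insertList k T L).entries) : v ∈ T.entries ∨ ∃ p ∈ L, p.1 = v := by
  induction L generalizing T with
  | nil => exact .inl hv
  | cons p L ih =>
    rcases ih hv with hv | ⟨q, hq, rfl⟩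
    · rcases mem_entries_insertVal hv with rfl | hv
      · exact .inr ⟨p, by simp, rfl⟩
      · exact .inl hv
    · exact .inr ⟨q, by simp [hq], rfl⟩

theorem insertList_append_of_forall_lt {L : List (ℕ × ℕ)} {q : ℕ × ℕ}
    (h : ∀ p ∈ L, p.1 < q.1) :
    insertList k [] (L ++ [q]) = Col.single q.2 q.1 :: insertList k [] L := by
  rw [insertList_append, insertList_cons, insertList_nil, insertVal_of_forall_lt]
  intro v hv
  rcases mem_entries_insertList hv with hv | ⟨p, hp, rfl⟩
  · simp [Tab.entries] at hv
  · exact h p hp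

/-- Once a value `x` larger than everything that follows sits alone in the first column, each
later smaller value lands on top of it and bumps the previous top ribbon into the columns to
the right, which therefore evolve as if `x` were absent. -/
theorem insertList_single_append {C : List (ℕ × ℕ)} {d : ℕ × ℕ} {x : ℕ} (jx : ℕ) (T : Tab k)
    (hC : ∀ p ∈ C, p.1 < x) (hd : d.1 < x) :
    insertList k (Col.single jx x :: T) (C ++ [d]) =
      Col.double d.2 (k + 1 - d.2) d.1 x :: insertList k T C := by
  induction C using List.reverseRecOn generalizing d with
  | nil => simp [insertVal_cons, Col.bottomVal, hd.not_gt]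
  | append_singleton C e ih =>
    have he : e.1 < x := hC e (by simp)
    rw [insertList_append, ih (fun p hp => hC p (by simp [hp])) he, insertList_append]
    simp [insertVal_cons, Col.bottomVal, hd.not_gt]

theorem shape_insertList_max_append {B C : List (ℕ × ℕ)} {y d : ℕ × ℕ}
    (hBC : ∀ p ∈ B ++ C, p.1 < y.1) (hd : d.1 < y.1) :
    (insertList k [] (B ++ y :: C ++ [d])).shape =
      Letter.two :: (insertList k [] (B ++ C)).shape := by
  have hB : ∀ p ∈ B, p.1 < y.1 := fun p hp => hBC p (by simp [hp])
  have hC : ∀ p ∈ C, p.1 < y.1 := fun p hp => hBC p (by simp [hp])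
  rw [List.append_assoc, List.cons_append, ← List.singleton_append, ← List.append_assoc,
    insertList_append, insertList_append_of_forall_lt hB, insertList_single_append _ _ hC hd,
    ← insertList_append]
  rfl

end Insertion

section GrowthRule

variable {k : ℕ}

theorem growthRule_of_eq_right (ν μ : Word k) : growthRule k ν μ ν none = μ := by
  by_cases h : μ = ν <;> simp [growthRule, h]

theorem growthRule_of_eq_left (ν μ : Word k) : growthRule k ν ν μ none = μ := by
  by_cases h : μ = ν <;> simp [growthRule, h]

theorem growthRule_self_some (ν : Word k) (j : ℕ) :
    growthRule k ν ν ν (some j) = Letter.one j :: ν := by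
  simp [growthRule]

theorem growthRule_of_ne_of_ne {ν μ₁ μ₂ : Word k} (h₁ : μ₁ ≠ ν) (h₂ : μ₂ ≠ ν) (x : Option ℕ) :
    growthRule k ν μ₁ μ₂ x = Letter.two :: ν := by
  simp [growthRule, h₁, h₂]

end GrowthRule

section GrowthLabel

variable {k : ℕ}

def growthLabel (k : ℕ) (L : List (ℕ × ℕ)) (r : ℕ) : Word k :=
  (insertList k [] (L.filter (·.1 ≤ r))).shape

theorem shape_insertList_ne_of_length_ne {L M : List (ℕ × ℕ)} (h : L.length ≠ M.length) :
    (insertList k [] L).shape ≠ (insertList k [] M).shape := fun heq => by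
  have := congrArg Word.rank heq
  rw [rank_shape_insertList, rank_shape_insertList] at this
  exact h (by simpa using this)

theorem filter_le_succ_eq_of_forall_ne {L : List (ℕ × ℕ)} {r : ℕ} (h : ∀ p ∈ L, p.1 ≠ r + 1) :
    L.filter (·.1 ≤ r + 1) = L.filter (·.1 ≤ r) :=
  List.filter_congr fun p hp => by have := h p hp; simp only [decide_eq_decide]; omega

theorem exists_filter_le_succ_eq_append_cons {L : List (ℕ × ℕ)} (hL : (L.map Prod.fst).Nodup)
    {y : ℕ × ℕ} (hy : y ∈ L) {r : ℕ} (hy₁ : y.1 = r + 1) :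
    ∃ B C, L.filter (·.1 ≤ r + 1) = B ++ y :: C ∧ L.filter (·.1 ≤ r) = B ++ C := by
  induction L with
  | nil => simp at hy
  | cons p L ih =>
    rw [List.map_cons, List.nodup_cons] at hL
    rcases List.mem_cons.mp hy with rfl | hy
    · refine ⟨[], L.filter (·.1 ≤ r), ?_, ?_⟩
      · rw [List.filter_cons_of_pos (by simp [hy₁]), filter_le_succ_eq_of_forall_ne]
        · rfl
        · rintro q hq hq₁
          exact hL.1 (hy₁ ▸ hq₁ ▸ List.mem_map_of_mem hq)
      · rw [List.filter_cons_of_neg (by simp [hy₁])]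
        rfl
    · obtain ⟨B, C, h₁, h₂⟩ := ih hL.2 hy
      have hpy : p.1 ≠ y.1 := fun h => hL.1 (h ▸ List.mem_map_of_mem hy)
      by_cases hp : p.1 ≤ r
      · exact ⟨p :: B, C, by simp [h₁, show p.1 ≤ r + 1 by omega], by simp [h₂, hp]⟩
      · exact ⟨B, C, by simp [h₁, show ¬p.1 ≤ r + 1 by omega], by simp [h₂, hp]⟩

theorem growthRule_growthLabel {L : List (ℕ × ℕ)} {p : ℕ × ℕ}
    (hL : ((L ++ [p]).map Prod.fst).Nodup) (r : ℕ) :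
    growthRule k (growthLabel k L r) (growthLabel k L (r + 1)) (growthLabel k (L ++ [p]) r)
        (if p.1 = r + 1 then some p.2 else none) =
      growthLabel k (L ++ [p]) (r + 1) := by
  rw [List.map_append, List.nodup_append] at hL
  have hpL : ∀ q ∈ L, q.1 ≠ p.1 := fun q hq => hL.2.2 _ (List.mem_map_of_mem hq) _ (by simp)
  simp only [growthLabel, List.filter_append, List.filter_singleton]
  rcases lt_trichotomy p.1 (r + 1) with hlt | hp₁ | hgt
  · have hpr : p.1 ≤ r := by omega
    simp only [hpr, show p.1 ≤ r + 1 by omega, decide_true, cond_true, hlt.ne, if_false]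
    by_cases hex : ∃ y ∈ L, y.1 = r + 1
    · obtain ⟨y, hy, hy₁⟩ := hex
      obtain ⟨B, C, h₁, h₂⟩ := exists_filter_le_succ_eq_append_cons hL.1 hy hy₁
      have hBC : ∀ q ∈ B ++ C, q.1 < y.1 := fun q hq => by
        rw [← h₂, List.mem_filter] at hq
        simpa [hy₁, Nat.lt_succ_iff] using hq.2
      rw [h₁, h₂, shape_insertList_max_append hBC (by omega)]
      exact growthRule_of_ne_of_ne (shape_insertList_ne_of_length_ne (by simp))
        (shape_insertList_ne_of_length_ne (by simp)) none
    · push Not at hex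
      rw [filter_le_succ_eq_of_forall_ne hex]
      exact growthRule_of_eq_left _ _
  · simp only [hp₁, show ¬r + 1 ≤ r by omega, le_refl, decide_true, decide_false, cond_true,
      cond_false, if_true, List.append_nil]
    rw [filter_le_succ_eq_of_forall_ne (hp₁ ▸ hpL), insertList_append_of_forall_lt]
    · exact growthRule_self_some _ _
    · intro q hq
      simpa [hp₁, Nat.lt_succ_iff] using (List.mem_filter.mp hq).2
  · simp only [show ¬p.1 ≤ r by omega, show ¬p.1 ≤ r + 1 by omega, hgt.ne', decide_false,
      cond_false, if_false, List.append_nil]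
    exact growthRule_of_eq_right _ _

end GrowthLabel

namespace ColoredPerm

variable {n k : ℕ} (π : ColoredPerm n k)

def word : List (ℕ × ℕ) := List.ofFn fun m => ((π.perm m : ℕ) + 1, π.color m)

theorem fst_mem_Icc_of_mem_word {p : ℕ × ℕ} (hp : p ∈ π.word) : p.1 ∈ Set.Icc 1 n := by
  obtain ⟨m, rfl⟩ := List.mem_ofFn.mp hp
  exact ⟨by simp, (π.perm m).isLt⟩

theorem nodup_map_fst_take_word (c : ℕ) : ((π.word.take c).map Prod.fst).Nodup := by
  refine ((List.take_sublist c _).map Prod.fst).nodup ?_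
  rw [word, List.map_ofFn]
  exact List.nodup_ofFn.mpr fun a b hab => π.perm.injective (Fin.ext (by simpa using hab))

theorem exists_take_succ_word {c : ℕ} (hc : c < n) :
    ∃ p, π.word.take (c + 1) = π.word.take c ++ [p] ∧
      ∀ r, squareX k n π c r = if p.1 = r + 1 then some p.2 else none := by
  refine ⟨((π.perm ⟨c, hc⟩ : ℕ) + 1, π.color ⟨c, hc⟩), ?_, fun r => ?_⟩
  · rw [List.take_add_one, List.getElem?_eq_getElem (by simpa [word] using hc)]
    simp [word]
  · unfold squareX
    by_cases hr : r < n
    · simp [hc, hr]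
    · have : (π.perm ⟨c, hc⟩ : ℕ) ≠ r := by have := (π.perm ⟨c, hc⟩).isLt; omega
      simp [hr, this]

end ColoredPerm

theorem PPartial_eq_insertList (k n : ℕ) (π : ColoredPerm n k) (c : ℕ) :
    PPartial k n π c = insertList k [] (π.word.take c) := by
  rw [PPartial, ColoredPerm.word, List.ofFn_eq_map, ← List.map_take, insertList, List.foldl_map]

theorem growth_eq_growthLabel (k n : ℕ) (π : ColoredPerm n k) (c r : ℕ) :
    growth k n π c r = growthLabel k (π.word.take c) r := by
  induction c generalizing r with
  | zero => rw [growth]; rfl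
  | succ c ihc =>
    induction r with
    | zero =>
      rw [growth, growthLabel, List.filter_eq_nil_iff.mpr]
      · rfl
      · intro p hp
        simpa [Nat.one_le_iff_ne_zero] using (π.fst_mem_Icc_of_mem_word (List.mem_of_mem_take hp)).1
    | succ r ihr =>
      rw [growth, ihc, ihc, ihr]
      by_cases hc : c < n
      · obtain ⟨p, htake, hX⟩ := π.exists_take_succ_word (k := k) hc
        rw [hX, htake]
        exact growthRule_growthLabel (htake ▸ π.nodup_map_fst_take_word (c + 1)) r
      · have hX : squareX k n π c r = none := by simp [squareX, hc]
        have hlen : π.word.length ≤ c := by simpa [ColoredPerm.word] using hc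
        rw [hX, List.take_of_length_le hlen, List.take_of_length_le (by omega)]
        exact growthRule_of_eq_right _ _

theorem QTab_eq_QhatTab_general (k n : ℕ) (π : ColoredPerm n k) :
    QTab k n π = QhatTab k n π := by
  have hchain : QChain k n π = QhatChain k n π := funext fun c => by
    rw [QChain, PPartial_eq_insertList, QhatChain, growth_eq_growthLabel, growthLabel,
      List.filter_eq_self.mpr fun p hp => by
        simpa using (π.fst_mem_Icc_of_mem_word (List.mem_of_mem_take hp)).2]
  rw [QTab, QhatTab, hchain]

/-- For every `k`-colored permutation `π` of length `n`, the recording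
tableau of the `k`-ribbon insertion algorithm equals the path tableau produced by Fomin's
growth rules along the top edge of the square diagram:  `Q(π) = Q̂(π)`. -/
theorem QTab_eq_QhatTab (k n : ℕ) (hk : 1 ≤ k) (π : ColoredPerm n k) :
    QTab k n π = QhatTab k n π :=
  QTab_eq_QhatTab_general k n π

end KRF
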